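/- arXiv:1905.08467 — 4 statements merged into one kernel-verified Lean document; each statement's English description precedes it below -/
import Mathlib

section
/- Let n ≥ 3 and let γ ∈ C³([a,b], ℝⁿ) with γ'(t) ≠ 0 for all t ∈ [a,b] and γ(t₁) ≠ γ(t₂) whenever t₁ ≠ t₂. Then there exists ε̄₁ > 0 such that for all ε ∈ (0, ε̄₁], the closed normal disks along γ are pairwise disjoint: (γ(t₁) + N_ε(t₁)) ∩ (γ(t₂) + N_ε(t₂)) = ∅ whenever t₁ ≠ t₂, t₁, t₂ ∈ [a,b]. -/
open Metric Set

noncomputable section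

abbrev Euc (n : ℕ) := EuclideanSpace ℝ (Fin n)

/-- The Euclidean Laplacian of `u : ℝⁿ → ℝ`. -/
def laplacian {n : ℕ} (u : Euc n → ℝ) (x : Euc n) : ℝ :=
  ∑ i : Fin n,
    fderiv ℝ (fun y => fderiv ℝ u y (EuclideanSpace.single i 1)) x (EuclideanSpace.single i 1)

/-- A classical solution of `Δu + f(u) = 0` in `Ω`, `u = 0` on `∂Ω`. -/
def IsClassicalSolution {n : ℕ} (f : ℝ → ℝ) (Ω : Set (Euc n)) (u : Euc n → ℝ) : Prop :=
  ContDiffOn ℝ 2 u Ω ∧ ContDiffOn ℝ 1 u (closure Ω) ∧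
    (∀ x ∈ Ω, laplacian u x + f (u x) = 0) ∧ (∀ x ∈ frontier Ω, u x = 0)

/-- Derivative of the curve `γ` within `[a,b]`. -/
def curveDeriv {n : ℕ} (γ : ℝ → Euc n) (a b t : ℝ) : Euc n :=
  derivWithin γ (Set.Icc a b) t

/-- The closed normal disk `N_ε(t)` of radius `ε` to the curve `γ` at parameter `t`. -/
def normalDisk {n : ℕ} (γ : ℝ → Euc n) (a b ε t : ℝ) : Set (Euc n) :=
  {ξ | (inner ℝ ξ (curveDeriv γ a b t) : ℝ) = 0 ∧ ‖ξ‖ ≤ ε}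

/-- The tubular domain `T_ε^γ = ⋃_{t ∈ (a,b)} (γ(t) + N_ε(t))`. -/
def tube {n : ℕ} (γ : ℝ → Euc n) (a b ε : ℝ) : Set (Euc n) :=
  ⋃ t ∈ Set.Ioo a b, (fun ξ => γ t + ξ) '' normalDisk γ a b ε t

open scoped NNReal RealInnerProductSpace

/-! If the disks at `t₁ < t₂` share a point, then `γ t₂ - γ t₁ = ξ₁ - ξ₂` has norm at most `2ε`.
For `t₂ - t₁` above a fixed `δ > 0` this contradicts compactness and injectivity, which keep
`‖γ t₂ - γ t₁‖` above some `d > 2ε`. For `t₂ - t₁ < δ`, the orthogonality `ξ₁ ⊥ γ'(t₁)`,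
`ξ₂ ⊥ γ'(t₂)` gives `⟪γ t₂ - γ t₁, γ'(t₁)⟫ = ⟪ξ₂, γ'(t₂) - γ'(t₁)⟫ = O(ε (t₂ - t₁))`, whereas by
Taylor's formula the left side is `≈ (t₂ - t₁) ‖γ'(t₁)‖²`, which is bounded below because `γ'`
does not vanish. -/

lemma IsCompact.exists_pos_le_dist_image_of_le_dist {α β : Type*} [PseudoMetricSpace α]
    [MetricSpace β] {s : Set α} {f : α → β} (hs : IsCompact s) (hf : ContinuousOn f s)
    (hinj : InjOn f s) {δ : ℝ} (hδ : 0 < δ) :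
    ∃ d > 0, ∀ x ∈ s, ∀ y ∈ s, δ ≤ dist x y → d ≤ dist (f x) (f y) := by
  set K := s ×ˢ s ∩ {p : α × α | δ ≤ dist p.1 p.2}
  have hK : IsCompact K :=
    (hs.prod hs).inter_right (isClosed_le continuous_const continuous_dist)
  have hcont : ContinuousOn (fun p : α × α => dist (f p.1) (f p.2)) K :=
    continuous_dist.comp_continuousOn ((hf.prodMap hf).mono inter_subset_left)
  have hpos : ∀ p ∈ K, 0 < dist (f p.1) (f p.2) := fun p ⟨⟨hp₁, hp₂⟩, hδp⟩ =>
    dist_pos.2 fun h => (hδ.trans_le hδp).ne' (by rw [hinj hp₁ hp₂ h, dist_self])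
  obtain ⟨d, hd, hdK⟩ := hK.exists_forall_le' hcont hpos
  exact ⟨d, hd, fun x hx y hy hxy => hdK (x, y) ⟨⟨hx, hy⟩, hxy⟩⟩

lemma norm_image_sub_sub_smul_le {F : Type*} [NormedAddCommGroup F] [NormedSpace ℝ F]
    {γ γ' : ℝ → F} {t₁ t₂ C : ℝ} (ht : t₁ ≤ t₂)
    (hd : ∀ t ∈ Icc t₁ t₂, HasDerivWithinAt γ (γ' t) (Icc t₁ t₂) t)
    (hC : ∀ t ∈ Icc t₁ t₂, ‖γ' t - γ' t₁‖ ≤ C) :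
    ‖γ t₂ - γ t₁ - (t₂ - t₁) • γ' t₁‖ ≤ C * (t₂ - t₁) := by
  have hd' : ∀ t ∈ Icc t₁ t₂, HasDerivWithinAt (fun s => γ s - s • γ' t₁)
      (γ' t - γ' t₁) (Icc t₁ t₂) t := fun t ht =>
    ((hd t ht).sub ((hasDerivWithinAt_id t _).smul_const (γ' t₁))).congr_deriv (by rw [one_smul])
  have := norm_image_sub_le_of_norm_deriv_le_segment' hd'
    (fun t ht => hC t (Ico_subset_Icc_self ht)) t₂ (right_mem_Icc.2 ht)
  simpa only [sub_smul, sub_sub_sub_comm] using this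

section NormalDisks

variable {E : Type*} [NormedAddCommGroup E] [InnerProductSpace ℝ E]

lemma inner_sub_eq_inner_of_add_eq_add {p₁ p₂ ξ₁ ξ₂ v w : E} (h : p₁ + ξ₁ = p₂ + ξ₂)
    (h₁ : ⟪ξ₁, v⟫ = 0) (h₂ : ⟪ξ₂, w⟫ = 0) : ⟪p₂ - p₁, v⟫ = ⟪ξ₂, w - v⟫ := by
  have hp : p₂ - p₁ = ξ₁ - ξ₂ := by rw [sub_eq_sub_iff_add_eq_add, ← h, add_comm]
  rw [hp, inner_sub_left, inner_sub_right, h₁, h₂, real_inner_comm]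

lemma add_ne_add_of_normal_of_close {γ γ' : ℝ → E} {t₁ t₂ L m ε : ℝ} {ξ₁ ξ₂ : E}
    (ht : t₁ < t₂) (hd : ∀ t ∈ Icc t₁ t₂, HasDerivWithinAt γ (γ' t) (Icc t₁ t₂) t)
    (hγ' : ∀ t ∈ Icc t₁ t₂, ‖γ' t - γ' t₁‖ ≤ L * (t₂ - t₁))
    (hm : 0 < m) (hm₁ : m ≤ ‖γ' t₁‖) (hclose : L * (t₂ - t₁) ≤ m / 2) (hεL : ε * L < m ^ 2 / 2)
    (hξ₁ : ⟪ξ₁, γ' t₁⟫ = 0) (hξ₂ : ⟪ξ₂, γ' t₂⟫ = 0) (hξ₂ε : ‖ξ₂‖ ≤ ε) :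
    γ t₁ + ξ₁ ≠ γ t₂ + ξ₂ := by
  intro h
  set v := γ' t₁
  set τ := t₂ - t₁
  have hτ : 0 < τ := sub_pos.2 ht
  have hupper : ⟪γ t₂ - γ t₁, v⟫ ≤ ε * (L * τ) := by
    rw [inner_sub_eq_inner_of_add_eq_add h hξ₁ hξ₂]
    calc ⟪ξ₂, γ' t₂ - v⟫ ≤ ‖ξ₂‖ * ‖γ' t₂ - v‖ := real_inner_le_norm _ _
      _ ≤ ε * (L * τ) :=
        mul_le_mul hξ₂ε (hγ' t₂ (right_mem_Icc.2 ht.le)) (norm_nonneg _)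
          ((norm_nonneg _).trans hξ₂ε)
  have hlower : τ * ‖v‖ ^ 2 - L * τ * τ * ‖v‖ ≤ ⟪γ t₂ - γ t₁, v⟫ := by
    have htaylor := norm_image_sub_sub_smul_le ht.le hd hγ'
    have hsplit : ⟪γ t₂ - γ t₁, v⟫ = τ * ‖v‖ ^ 2 + ⟪γ t₂ - γ t₁ - τ • v, v⟫ := by
      rw [inner_sub_left (γ t₂ - γ t₁), real_inner_smul_left, real_inner_self_eq_norm_sq]
      ring
    have hrem := (abs_le.1 ((abs_real_inner_le_norm (γ t₂ - γ t₁ - τ • v) v).trans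
      (mul_le_mul_of_nonneg_right htaylor (norm_nonneg v)))).1
    linarith
  have hv : m ^ 2 ≤ ‖v‖ ^ 2 := pow_le_pow_left₀ hm.le hm₁ 2
  have hkey : ‖v‖ ^ 2 - L * τ * ‖v‖ ≤ ε * L := by
    have := hlower.trans hupper
    nlinarith
  nlinarith [mul_le_mul_of_nonneg_right hclose (norm_nonneg v)]

theorem exists_pos_forall_add_ne_add_of_normal {γ γ' : ℝ → E} {a b : ℝ} {K : ℝ≥0}
    (hd : ∀ t ∈ Icc a b, HasDerivWithinAt γ (γ' t) (Icc a b) t)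
    (hlip : LipschitzOnWith K γ' (Icc a b)) (hγ' : ∀ t ∈ Icc a b, γ' t ≠ 0)
    (hinj : InjOn γ (Icc a b)) :
    ∃ εbar > 0, ∀ ε ≤ εbar, ∀ t₁ ∈ Icc a b, ∀ t₂ ∈ Icc a b, t₁ ≠ t₂ →
      ∀ ξ₁ ξ₂ : E, ⟪ξ₁, γ' t₁⟫ = 0 → ‖ξ₁‖ ≤ ε → ⟪ξ₂, γ' t₂⟫ = 0 → ‖ξ₂‖ ≤ ε →
        γ t₁ + ξ₁ ≠ γ t₂ + ξ₂ := by
  obtain ⟨m, hm, hmγ'⟩ := isCompact_Icc.exists_forall_le' hlip.continuousOn.norm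
    fun t ht => norm_pos_iff.2 (hγ' t ht)
  set δ := m / (2 * (K + 1))
  obtain ⟨d, hd₀, hdist⟩ := isCompact_Icc.exists_pos_le_dist_image_of_le_dist
    (fun t ht => (hd t ht).continuousWithinAt) hinj (by positivity : 0 < δ)
  refine ⟨min (m ^ 2 / (2 * (K + 1))) (d / 3), by positivity, ?_⟩
  intro ε hε t₁ ht₁ t₂ ht₂ hne ξ₁ ξ₂ hξ₁ hξ₁ε hξ₂ hξ₂ε
  wlog hlt : t₁ < t₂ generalizing t₁ t₂ ξ₁ ξ₂
  · exact (this t₂ ht₂ t₁ ht₁ hne.symm ξ₂ ξ₁ hξ₂ hξ₂ε hξ₁ hξ₁ε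
      (hne.lt_or_gt.resolve_left hlt)).symm
  have hε₁ := hε.trans (min_le_left _ _)
  have hε₂ := hε.trans (min_le_right _ _)
  have hdist_eq : dist t₁ t₂ = t₂ - t₁ := by rw [dist_comm, Real.dist_eq, abs_of_pos (by linarith)]
  rcases le_or_gt δ (t₂ - t₁) with hfar | hclose
  · intro h
    have hdist_le : dist (γ t₁) (γ t₂) ≤ 2 * ε := by
      rw [dist_eq_norm, sub_eq_sub_iff_add_eq_add.2 (by rw [h, add_comm])]
      linarith [norm_sub_le ξ₂ ξ₁]
    linarith [hdist t₁ ht₁ t₂ ht₂ (hdist_eq ▸ hfar)]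
  have hsub : Icc t₁ t₂ ⊆ Icc a b := Icc_subset_Icc ht₁.1 ht₂.2
  refine add_ne_add_of_normal_of_close hlt (fun t ht => (hd t (hsub ht)).mono hsub)
    (L := K) (fun t ht => ?_) hm (hmγ' t₁ ht₁) ?_ ?_ hξ₁ hξ₂ hξ₂ε
  · rw [← dist_eq_norm]
    refine (hlip.dist_le_mul t (hsub ht) t₁ ht₁).trans (mul_le_mul_of_nonneg_left ?_ K.2)
    rw [Real.dist_eq, abs_of_nonneg (by linarith [ht.1])]
    linarith [ht.2]
  · calc (K : ℝ) * (t₂ - t₁) ≤ K * δ := mul_le_mul_of_nonneg_left hclose.le K.2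
      _ ≤ m / 2 := by
        rw [mul_div_assoc', div_le_div_iff₀ (by positivity) two_pos]
        nlinarith
  · calc ε * K ≤ m ^ 2 / (2 * (K + 1)) * K := mul_le_mul_of_nonneg_right hε₁ K.2
      _ < m ^ 2 / 2 := by
        rw [div_mul_eq_mul_div, div_lt_div_iff₀ (by positivity) two_pos]
        nlinarith [pow_pos hm 2]

end NormalDisks

theorem normal_disks_pairwise_disjoint_general (n : ℕ) (a b : ℝ) (hab : a < b)
    (γ : ℝ → Euc n) (hγ : ContDiffOn ℝ 3 γ (Set.Icc a b))
    (hγ' : ∀ t ∈ Set.Icc a b, curveDeriv γ a b t ≠ 0)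
    (hγinj : Set.InjOn γ (Set.Icc a b)) :
    ∃ εbar₁ > 0, ∀ ε : ℝ, 0 < ε → ε ≤ εbar₁ →
      ∀ t₁ ∈ Set.Icc a b, ∀ t₂ ∈ Set.Icc a b, t₁ ≠ t₂ →
        Disjoint ((fun ξ => γ t₁ + ξ) '' normalDisk γ a b ε t₁)
          ((fun ξ => γ t₂ + ξ) '' normalDisk γ a b ε t₂) := by
  have hd : ∀ t ∈ Icc a b, HasDerivWithinAt γ (curveDeriv γ a b t) (Icc a b) t :=
    fun t ht => (hγ.differentiableOn (by norm_num) t ht).hasDerivWithinAt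
  have hC1 : ContDiffOn ℝ 1 (curveDeriv γ a b) (Icc a b) :=
    hγ.derivWithin (uniqueDiffOn_Icc hab) (by norm_num)
  obtain ⟨K, hlip⟩ := hC1.exists_lipschitzOnWith one_ne_zero (convex_Icc a b) isCompact_Icc
  obtain ⟨εbar, hεbar, hdisj⟩ := exists_pos_forall_add_ne_add_of_normal hd hlip hγ' hγinj
  refine ⟨εbar, hεbar, fun ε _ hε t₁ ht₁ t₂ ht₂ ht => disjoint_left.2 ?_⟩
  rintro _ ⟨ξ₁, ⟨hξ₁, hξ₁ε⟩, rfl⟩ ⟨ξ₂, ⟨hξ₂, hξ₂ε⟩, h⟩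
  exact hdisj ε hε t₁ ht₁ t₂ ht₂ ht ξ₁ ξ₂ hξ₁ hξ₁ε hξ₂ hξ₂ε h.symm

/-- There is `ε̄₁ > 0` such that for `ε ∈ (0, ε̄₁]` the closed normal disks along `γ`
are pairwise disjoint. -/
theorem normal_disks_pairwise_disjoint (n : ℕ) (hn : 3 ≤ n) (a b : ℝ) (hab : a < b)
    (γ : ℝ → Euc n) (hγ : ContDiffOn ℝ 3 γ (Set.Icc a b))
    (hγ' : ∀ t ∈ Set.Icc a b, curveDeriv γ a b t ≠ 0)
    (hγinj : Set.InjOn γ (Set.Icc a b)) :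
    ∃ εbar₁ > 0, ∀ ε : ℝ, 0 < ε → ε ≤ εbar₁ →
      ∀ t₁ ∈ Set.Icc a b, ∀ t₂ ∈ Set.Icc a b, t₁ ≠ t₂ →
        Disjoint ((fun ξ => γ t₁ + ξ) '' normalDisk γ a b ε t₁)
          ((fun ξ => γ t₂ + ξ) '' normalDisk γ a b ε t₂) :=
  normal_disks_pairwise_disjoint_general n a b hab γ hγ hγ' hγinj
end
end

section
/- Let n ≥ 3 and let γ ∈ C³([a,b], ℝⁿ) with γ'(t) ≠ 0 for all t ∈ [a,b] and γ(t₁) ≠ γ(t₂) whenever t₁ ≠ t₂. Then there exists ε̄₁ > 0 such that for every ε ∈ (0, ε̄₁) and every x ∈ T_ε^γ there exists a unique t ∈ (a,b) such that |x − γ(t)| = dist(x, Γ); moreover, for this t one has (x − γ(t))·γ'(t) = 0. -/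
open Metric Set

noncomputable section

open scoped NNReal RealInnerProductSpace

/-!
A regular injective curve with Lipschitz derivative is bi-Lipschitz from below on `[a,b]`,
`c |s - t| ≤ |γ(s) - γ(t)|`: by Taylor's formula for nearby parameters, and by compactness and
injectivity for distant ones. If `x = γ(t) + ξ` with `ξ ⊥ γ'(t)` and `|ξ| ≤ ε`, then for
`s ≠ t`
`|x - γ(s)|² = |ξ|² - 2⟨ξ, γ(s) - γ(t) - (s - t) γ'(t)⟩ + |γ(s) - γ(t)|²
  ≥ |ξ|² + (c² - 2εK) |s - t|²`,
where `K` is a Lipschitz constant of `γ'`. So for `ε < c² / 2K` the foot point `γ(t)` is the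
unique nearest point of the curve.
-/

theorem IsCompact.exists_pos_le_dist_of_injOn {X Y : Type*} [PseudoMetricSpace X]
    [MetricSpace Y] {f : X → Y} {s : Set X} (hs : IsCompact s) (hf : ContinuousOn f s)
    (hinj : InjOn f s) {δ : ℝ} (hδ : 0 < δ) :
    ∃ ρ > 0, ∀ x ∈ s, ∀ y ∈ s, δ ≤ dist x y → ρ ≤ dist (f x) (f y) := by
  set S := (s ×ˢ s) ∩ {p : X × X | δ ≤ dist p.1 p.2}
  have hS : IsCompact S := (hs.prod hs).inter_right (isClosed_le continuous_const continuous_dist)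
  have hcont : ContinuousOn (fun p : X × X => dist (f p.1) (f p.2)) S :=
    continuous_dist.comp_continuousOn <|
      (hf.comp continuousOn_fst fun p (hp : p ∈ S) => hp.1.1).prodMk
        (hf.comp continuousOn_snd fun p (hp : p ∈ S) => hp.1.2)
  obtain ⟨ρ, hρ, hle⟩ := hS.exists_forall_le' hcont (a := 0) fun p ⟨⟨h1, h2⟩, hp⟩ =>
    dist_pos.2 fun heq => by
      have hδle : δ ≤ dist p.1 p.2 := hp
      rw [hinj h1 h2 heq, dist_self] at hδle
      linarith
  exact ⟨ρ, hρ, fun x hx y hy hxy => hle (x, y) ⟨⟨hx, hy⟩, hxy⟩⟩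

section NormedSpace

variable {E : Type*} [NormedAddCommGroup E] [NormedSpace ℝ E]

theorem norm_sub_sub_smul_le_of_lipschitzOnWith {f f' : ℝ → E} {s : Set ℝ} {K : ℝ≥0}
    (hs : Convex ℝ s) (hf : ∀ x ∈ s, HasDerivWithinAt f (f' x) s x)
    (hf' : LipschitzOnWith K f' s) {x y : ℝ} (hx : x ∈ s) (hy : y ∈ s) :
    ‖f y - f x - (y - x) • f' x‖ ≤ K * |y - x| ^ 2 := by
  have hsub : uIcc x y ⊆ s := hs.ordConnected.uIcc_subset hx hy
  have hderiv : ∀ u ∈ uIcc x y,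
      HasDerivWithinAt (fun u => f u - u • f' x) (f' u - f' x) (uIcc x y) u := fun u hu =>
    ((hf u (hsub hu)).mono hsub).sub (by simpa using (hasDerivWithinAt_id u _).smul_const (f' x))
  have hbound : ∀ u ∈ uIcc x y, ‖f' u - f' x‖ ≤ K * |y - x| := fun u hu =>
    (hf'.norm_sub_le (hsub hu) hx).trans <| by
      gcongr
      exact abs_sub_left_of_mem_uIcc hu
  have := (convex_uIcc x y).norm_image_sub_le_of_norm_hasDerivWithin_le hderiv hbound
    left_mem_uIcc right_mem_uIcc
  calc ‖f y - f x - (y - x) • f' x‖ = ‖(f y - y • f' x) - (f x - x • f' x)‖ := by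
        rw [sub_smul]; abel_nf
    _ ≤ K * |y - x| ^ 2 := by rw [Real.norm_eq_abs] at this; linarith

theorem half_mul_abs_le_norm_sub_of_norm_sub_sub_smul_le {p q v : E} {h K m : ℝ}
    (hm : m ≤ ‖v‖) (hT : ‖q - p - h • v‖ ≤ K * |h| ^ 2) (hh : K * |h| ≤ m / 2) :
    m / 2 * |h| ≤ ‖q - p‖ := by
  have hsmul := norm_sub_norm_le (h • v) (q - p)
  rw [norm_smul, Real.norm_eq_abs, norm_sub_rev (h • v)] at hsmul
  nlinarith [abs_nonneg h]

theorem exists_pos_mul_abs_sub_le_norm_sub_of_injOn {γ γ' : ℝ → E} {a b : ℝ} {K : ℝ≥0}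
    (hab : a < b) (hγ : ∀ t ∈ Icc a b, HasDerivWithinAt γ (γ' t) (Icc a b) t)
    (hγ' : LipschitzOnWith K γ' (Icc a b)) (hγ'0 : ∀ t ∈ Icc a b, γ' t ≠ 0)
    (hinj : InjOn γ (Icc a b)) :
    ∃ c > 0, ∀ s ∈ Icc a b, ∀ t ∈ Icc a b, c * |s - t| ≤ ‖γ s - γ t‖ := by
  obtain ⟨m, hm, hmle⟩ := isCompact_Icc.exists_forall_le' hγ'.continuousOn.norm (a := 0)
    fun t ht => norm_pos_iff.2 (hγ'0 t ht)
  set δ := m / (2 * (K + 1))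
  have hδ : 0 < δ := by positivity
  obtain ⟨ρ, hρ, hfar⟩ := isCompact_Icc.exists_pos_le_dist_of_injOn
    (fun t ht => (hγ t ht).continuousWithinAt) hinj hδ
  refine ⟨min (m / 2) (ρ / (b - a)), by have := sub_pos.2 hab; positivity, fun s hs t ht => ?_⟩
  rcases le_or_gt |s - t| δ with hnear | hfar'
  · refine (mul_le_mul_of_nonneg_right (min_le_left _ _) (abs_nonneg _)).trans ?_
    refine half_mul_abs_le_norm_sub_of_norm_sub_sub_smul_le (hmle t ht)
      (norm_sub_sub_smul_le_of_lipschitzOnWith (convex_Icc a b) hγ hγ' ht hs) ?_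
    calc (K : ℝ) * |s - t| ≤ (K + 1) * δ := by gcongr; linarith
      _ = m / 2 := by simp only [δ]; field_simp
  · have hwidth : |s - t| ≤ b - a :=
      abs_sub_le_iff.2 ⟨by linarith [hs.2, ht.1], by linarith [hs.1, ht.2]⟩
    have hρle : ρ ≤ ‖γ s - γ t‖ := by
      simpa [dist_eq_norm, Real.dist_eq] using
        hfar s hs t ht (by rw [Real.dist_eq]; exact hfar'.le)
    calc min (m / 2) (ρ / (b - a)) * |s - t| ≤ ρ / (b - a) * (b - a) := by
          gcongr
          exact min_le_right _ _
      _ = ρ := div_mul_cancel₀ _ (sub_pos.2 hab).ne'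
      _ ≤ ‖γ s - γ t‖ := hρle

end NormedSpace

section Orthogonal

variable {F : Type*} [NormedAddCommGroup F] [InnerProductSpace ℝ F]

theorem norm_lt_norm_add_sub_of_inner_eq_zero {p q v ξ : F} {h c K ε : ℝ}
    (hξ : ⟪ξ, v⟫ = 0) (hξε : ‖ξ‖ ≤ ε) (hT : ‖q - p - h • v‖ ≤ K * |h| ^ 2)
    (hc0 : 0 ≤ c) (hc : c * |h| ≤ ‖q - p‖) (hε : 2 * ε * K < c ^ 2) (hh : h ≠ 0) :
    ‖ξ‖ < ‖p + ξ - q‖ := by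
  have hshift : ⟪ξ, q - p - h • v⟫ = ⟪ξ, q - p⟫ := by
    rw [inner_sub_right, real_inner_smul_right, hξ, mul_zero, sub_zero]
  have hexpand : ‖p + ξ - q‖ ^ 2 = ‖ξ‖ ^ 2 - 2 * ⟪ξ, q - p⟫ + ‖q - p‖ ^ 2 := by
    rw [show p + ξ - q = ξ - (q - p) by abel, norm_sub_sq_real]
  have hcross : ⟪ξ, q - p⟫ ≤ ε * (K * |h| ^ 2) :=
    hshift ▸ (real_inner_le_norm _ _).trans
      (mul_le_mul hξε hT (norm_nonneg _) ((norm_nonneg _).trans hξε))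
  have hchord : c ^ 2 * |h| ^ 2 ≤ ‖q - p‖ ^ 2 := by
    rw [← mul_pow]; exact pow_le_pow_left₀ (by positivity) hc 2
  have hpos : 0 < |h| ^ 2 := by positivity
  refine lt_of_pow_lt_pow_left₀ 2 (norm_nonneg _) ?_
  nlinarith

end Orthogonal

theorem dist_eq_infDist_image_iff {X Y : Type*} [PseudoMetricSpace Y] {f : X → Y} {s : Set X}
    {x : Y} {t : X} (ht : t ∈ s) (hmin : ∀ u ∈ s, u ≠ t → dist x (f t) < dist x (f u))
    {u : X} (hu : u ∈ s) : dist x (f u) = infDist x (f '' s) ↔ u = t := by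
  have hinf : infDist x (f '' s) = dist x (f t) := by
    refine le_antisymm (infDist_le_dist_of_mem (mem_image_of_mem f ht))
      ((le_infDist ⟨f t, mem_image_of_mem f ht⟩).2 ?_)
    rintro _ ⟨w, hw, rfl⟩
    rcases eq_or_ne w t with rfl | hwt
    · exact le_rfl
    · exact (hmin w hw hwt).le
  rw [hinf]
  exact ⟨fun hd => by_contra fun hut => (hmin u hu hut).ne' hd, fun hut => hut ▸ rfl⟩

theorem unique_nearest_parameter_general (n : ℕ) (a b : ℝ) (hab : a < b)
    (γ : ℝ → Euc n) (hγ : ContDiffOn ℝ 3 γ (Set.Icc a b))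
    (hγ' : ∀ t ∈ Set.Icc a b, curveDeriv γ a b t ≠ 0)
    (hγinj : Set.InjOn γ (Set.Icc a b)) :
    ∃ εbar₁ > 0, ∀ ε ∈ Set.Ioo 0 εbar₁, ∀ x ∈ tube γ a b ε,
      (∃! t : ℝ, t ∈ Set.Ioo a b ∧ ‖x - γ t‖ = infDist x (γ '' Set.Icc a b)) ∧
      (∀ t ∈ Set.Ioo a b, ‖x - γ t‖ = infDist x (γ '' Set.Icc a b) →
        (inner ℝ (x - γ t) (curveDeriv γ a b t) : ℝ) = 0) := by
  have hderiv : ∀ t ∈ Icc a b, HasDerivWithinAt γ (curveDeriv γ a b t) (Icc a b) t :=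
    fun t ht => ((hγ.differentiableOn (by norm_num)) t ht).hasDerivWithinAt
  obtain ⟨K, hK⟩ : ∃ K, LipschitzOnWith K (curveDeriv γ a b) (Icc a b) :=
    (hγ.derivWithin (m := 1) (uniqueDiffOn_Icc hab) (by norm_num)).exists_lipschitzOnWith
      one_ne_zero (convex_Icc a b) isCompact_Icc
  obtain ⟨c, hc, hchord⟩ :=
    exists_pos_mul_abs_sub_le_norm_sub_of_injOn hab hderiv hK hγ' hγinj
  refine ⟨c ^ 2 / (2 * K + 1), by positivity, ?_⟩
  rintro ε ⟨hε, hεc⟩ x hx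
  simp only [tube, normalDisk, mem_iUnion, mem_image, exists_prop] at hx
  obtain ⟨t, ht, ξ, ⟨hξ, hξε⟩, rfl⟩ := hx
  have htI := Ioo_subset_Icc_self ht
  have hmin : ∀ s ∈ Icc a b, s ≠ t → dist (γ t + ξ) (γ t) < dist (γ t + ξ) (γ s) := by
    intro s hs hst
    rw [dist_eq_norm, dist_eq_norm, add_sub_cancel_left]
    refine norm_lt_norm_add_sub_of_inner_eq_zero hξ hξε
      (norm_sub_sub_smul_le_of_lipschitzOnWith (convex_Icc a b) hderiv hK htI hs)
      hc.le (hchord s hs t htI) ?_ (sub_ne_zero.2 hst)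
    rw [lt_div_iff₀ (by positivity)] at hεc
    nlinarith
  have hnearest := fun s (hs : s ∈ Icc a b) => dist_eq_infDist_image_iff htI hmin hs
  simp only [dist_eq_norm] at hnearest
  refine ⟨⟨t, ⟨ht, (hnearest t htI).2 rfl⟩,
    fun s hs => (hnearest s (Ioo_subset_Icc_self hs.1)).1 hs.2⟩, fun s hs hd => ?_⟩
  obtain rfl := (hnearest s (Ioo_subset_Icc_self hs)).1 hd
  simpa using hξ

/-- For small `ε`, every point of `T_ε^γ` has a unique nearest parameter `t ∈ (a,b)` on the
curve, and the difference `x − γ(t)` is orthogonal to `γ'(t)`. -/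
theorem unique_nearest_parameter (n : ℕ) (hn : 3 ≤ n) (a b : ℝ) (hab : a < b)
    (γ : ℝ → Euc n) (hγ : ContDiffOn ℝ 3 γ (Set.Icc a b))
    (hγ' : ∀ t ∈ Set.Icc a b, curveDeriv γ a b t ≠ 0)
    (hγinj : Set.InjOn γ (Set.Icc a b)) :
    ∃ εbar₁ > 0, ∀ ε ∈ Set.Ioo 0 εbar₁, ∀ x ∈ tube γ a b ε,
      (∃! t : ℝ, t ∈ Set.Ioo a b ∧ ‖x - γ t‖ = infDist x (γ '' Set.Icc a b)) ∧
      (∀ t ∈ Set.Ioo a b, ‖x - γ t‖ = infDist x (γ '' Set.Icc a b) →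
        (inner ℝ (x - γ t) (curveDeriv γ a b t) : ℝ) = 0) :=
  unique_nearest_parameter_general n a b hab γ hγ hγ' hγinj
end
end

section
/- Let n ≥ 3, let γ̃ : [a,b] → ℝⁿ be a C³ curve with γ̃'(t) ≠ 0 for all t, γ̃(a) = γ̃(b), γ̃'(a) = γ̃'(b), and γ̃(t₁) ≠ γ̃(t₂) for t₁ ≠ t₂ in [a,b). Let ε > 0 be such that every x ∈ T̃_ε(Γ̃) has a unique nearest point p(x) ∈ Γ̃ (i.e. |x − p(x)| = dist(x, Γ̃)), and set ṽ(x) = x − p(x). Then for every t ∈ [a,b], ṽ is differentiable at γ̃(t) and its derivative L there satisfies L[γ̃'(t)] = 0 and L[ψ] = ψ for every ψ ∈ ℝⁿ with ψ·γ̃'(t) = 0; consequently div ṽ(γ̃(t)) = trace L = n − 1, and L[η]·η = |η|² − (η·γ̃'(t))²/|γ̃'(t)|² for every η ∈ ℝⁿ. -/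
open Metric Set

noncomputable section

/-- The tubular neighbourhood `T̃_ε(Γ) = {x : dist(x,Γ) < ε}`. -/
def distTube {n : ℕ} (Γ : Set (Euc n)) (ε : ℝ) : Set (Euc n) :=
  {x | infDist x Γ < ε}

/-!
The candidate derivative is the orthogonal projection `P` onto the normal space
`(ℝ ∙ γ'(t))ᗮ`; the algebraic identities are properties of `P`. For differentiability, take `x`
near `γ t`, put `r = ‖x - γ t‖`, write the nearest point as `p x = γ s`, and let `t'` be a
parameter of `γ t` close to `s` (when `t` is an endpoint, `t'` may be the other endpoint).
Compactness and injectivity of the closed curve give `|s - t'| = O(r)`. The vector `x - γ s` is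
orthogonal to `γ'(s)` (first-order condition at a nearest point, using the closing conditions at
the endpoints), so its tangential part is `O(|s - t'| r)`; and by Taylor's formula at `t'`,
`γ s - γ t` is `(s - t') γ'(t)` up to `O(|s - t'|²)`. Hence `x - p x - P (x - γ t) = O(r²)`.
-/

open Filter Topology Asymptotics
open scoped RealInnerProductSpace

section Projection

variable {E : Type*} [NormedAddCommGroup E] [InnerProductSpace ℝ E]

theorem Submodule.starProjection_orthogonal_singleton_apply (v w : E) :
    (ℝ ∙ v)ᗮ.starProjection w = w - (⟪v, w⟫ / ‖v‖ ^ 2) • v := by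
  rw [starProjection_orthogonal_val, starProjection_singleton]
  rfl

theorem Submodule.norm_starProjection_singleton (v w : E) :
    ‖(ℝ ∙ v).starProjection w‖ = |⟪v, w⟫| / ‖v‖ := by
  rcases eq_or_ne v 0 with rfl | hv
  · simp
  have : ‖v‖ ≠ 0 := norm_ne_zero_iff.2 hv
  rw [starProjection_singleton, norm_smul, Real.norm_eq_abs, abs_div]
  simp only [RCLike.ofReal_real_eq_id, id, abs_pow, abs_norm]
  field_simp

theorem Submodule.inner_starProjection_orthogonal_singleton_self (v η : E) :
    ⟪(ℝ ∙ v)ᗮ.starProjection η, η⟫ = ‖η‖ ^ 2 - ⟪η, v⟫ ^ 2 / ‖v‖ ^ 2 := by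
  rw [starProjection_orthogonal_singleton_apply, inner_sub_left, real_inner_smul_left,
    real_inner_self_eq_norm_sq, real_inner_comm η v]
  ring

theorem Submodule.trace_starProjection_orthogonal_singleton [FiniteDimensional ℝ E] {v : E}
    (hv : v ≠ 0) :
    LinearMap.trace ℝ E ((ℝ ∙ v)ᗮ.starProjection : E →ₗ[ℝ] E) = Module.finrank ℝ E - 1 := by
  have hrank : (ℝ ∙ v).starProjection = (‖v‖ ^ 2)⁻¹ • InnerProductSpace.rankOne ℝ v v := by
    ext w
    simp [starProjection_singleton, smul_smul, div_eq_inv_mul]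
  rw [starProjection_orthogonal, hrank, ContinuousLinearMap.toLinearMap_sub, map_sub,
    ContinuousLinearMap.toLinearMap_smul, map_smul, InnerProductSpace.trace_rankOne,
    real_inner_self_eq_norm_sq, ContinuousLinearMap.coe_id, LinearMap.trace_id]
  have : ‖v‖ ≠ 0 := norm_ne_zero_iff.2 hv
  rw [smul_eq_mul, inv_mul_cancel₀ (pow_ne_zero 2 this)]

theorem Submodule.norm_sub_starProjection_orthogonal_singleton_le {v u w e : E} (c : ℝ)
    (hw : ⟪w, u⟫ = 0) :
    ‖w - (ℝ ∙ v)ᗮ.starProjection (w + c • v + e)‖ ≤ ‖v - u‖ * ‖w‖ / ‖v‖ + ‖e‖ := by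
  have hsplit : w - (ℝ ∙ v)ᗮ.starProjection (w + c • v + e)
      = (ℝ ∙ v).starProjection w - (ℝ ∙ v)ᗮ.starProjection e := by
    rw [map_add, map_add, map_smul, starProjection_orthogonalComplement_singleton_eq_zero,
      smul_zero, add_zero, starProjection_orthogonal_val]
    abel
  have hvw : ⟪v, w⟫ = ⟪v - u, w⟫ := by
    rw [inner_sub_left, ← real_inner_comm u w, hw, sub_zero]
  rw [hsplit]
  calc _ ≤ ‖(ℝ ∙ v).starProjection w‖ + ‖(ℝ ∙ v)ᗮ.starProjection e‖ := norm_sub_le _ _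
    _ ≤ ‖v - u‖ * ‖w‖ / ‖v‖ + ‖e‖ := by
      rw [norm_starProjection_singleton, hvw]
      gcongr
      · exact abs_real_inner_le_norm _ _
      · exact norm_starProjection_apply_le _ _

end Projection

theorem hasFDerivAt_of_isBigO_sub_sq {𝕜 E F : Type*} [NontriviallyNormedField 𝕜]
    [NormedAddCommGroup E] [NormedSpace 𝕜 E] [NormedAddCommGroup F] [NormedSpace 𝕜 F]
    {f : E → F} {L : E →L[𝕜] F} {x₀ : E}
    (h : (fun x => f x - L (x - x₀)) =O[𝓝 x₀] fun x => ‖x - x₀‖ ^ 2) : HasFDerivAt f L x₀ := by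
  have hL : HasFDerivAt (fun x => L (x - x₀)) L x₀ := by
    simpa only [map_sub] using L.hasFDerivAt.sub_const (L x₀)
  convert (h.hasFDerivAt one_lt_two).add hL using 1
  · ext x
    simp
  · simp

theorem IsCompact.exists_pos_near_fiber {α β : Type*} [PseudoMetricSpace α] [MetricSpace β]
    {K : Set α} {f : α → β} (hK : IsCompact K) (hf : ContinuousOn f K) (y : β) {η : ℝ}
    (hη : 0 < η) :
    ∃ ρ > 0, ∀ s ∈ K, dist (f s) y < ρ → ∃ t ∈ K, f t = y ∧ dist s t < η := by
  set Z := K ∩ f ⁻¹' {y}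
  have hfar : IsCompact (f '' (K \ thickening η Z)) :=
    (hK.diff isOpen_thickening).image_of_continuousOn (hf.mono sdiff_subset)
  have hy : y ∉ f '' (K \ thickening η Z) := by
    rintro ⟨s, ⟨hsK, hsZ⟩, hfs⟩
    exact hsZ (self_subset_thickening hη _ ⟨hsK, hfs⟩)
  obtain ⟨ρ, hρ, hball⟩ := Metric.mem_nhds_iff.1 (hfar.isClosed.isOpen_compl.mem_nhds hy)
  refine ⟨ρ, hρ, fun s hs hfs => ?_⟩
  have hsZ : s ∈ thickening η Z := by
    by_contra hsZ
    exact hball (mem_ball.2 hfs) ⟨s, ⟨hs, hsZ⟩, rfl⟩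
  obtain ⟨t, ⟨htK, hft⟩, hst⟩ := mem_thickening_iff.1 hsZ
  exact ⟨t, htK, hft, hst⟩

theorem isMinOn_norm_sub_of_dist_eq_infDist {α E : Type*} [SeminormedAddCommGroup E]
    {γ : α → E} {K : Set α} {x : E} {s : α} (h : dist x (γ s) = infDist x (γ '' K)) :
    IsMinOn (fun u => ‖x - γ u‖) K s :=
  isMinOn_iff.2 fun u hu => by
    simpa only [← dist_eq_norm, h] using infDist_le_dist_of_mem (mem_image_of_mem γ hu)

theorem IsMinOn.mul_sub_nonneg_of_hasDerivWithinAt {f : ℝ → ℝ} {K : Set ℝ} {s u f' : ℝ}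
    (hK : Convex ℝ K) (h : IsMinOn f K s) (hf : HasDerivWithinAt f f' K s) (hs : s ∈ K)
    (hu : u ∈ K) : 0 ≤ (u - s) * f' := by
  simpa [mul_comm] using h.localize.hasFDerivWithinAt_nonneg hf.hasFDerivWithinAt
    (sub_mem_posTangentConeAt_of_segment_subset (hK.segment_subset hs hu))

section Curve

variable {E : Type*} [NormedAddCommGroup E] [NormedSpace ℝ E] {γ : ℝ → E} {a b : ℝ}

theorem exists_norm_derivWithin_Icc_sub_le (hab : a < b) (hγ : ContDiffOn ℝ 2 γ (Icc a b)) :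
    ∃ M > 0, ∀ s ∈ Icc a b, ∀ u ∈ Icc a b,
      ‖derivWithin γ (Icc a b) s - derivWithin γ (Icc a b) u‖ ≤ M * |s - u| := by
  have hg : ContDiffOn ℝ 1 (derivWithin γ (Icc a b)) (Icc a b) :=
    hγ.derivWithin (uniqueDiffOn_Icc hab) (by norm_num)
  obtain ⟨C, hC⟩ := isCompact_Icc.exists_bound_of_continuousOn
    (hg.continuousOn_derivWithin (uniqueDiffOn_Icc hab) le_rfl)
  refine ⟨max C 1, by positivity, fun s hs u hu => ?_⟩
  simpa only [Real.norm_eq_abs] using (convex_Icc a b).norm_image_sub_le_of_norm_derivWithin_le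
    (hg.differentiableOn one_ne_zero) (fun w hw => (hC w hw).trans (le_max_left C 1)) hu hs

theorem norm_sub_sub_smul_derivWithin_Icc_le (hγ : DifferentiableOn ℝ γ (Icc a b)) {M : ℝ}
    (hM0 : 0 ≤ M) (hM : ∀ s ∈ Icc a b, ∀ u ∈ Icc a b,
      ‖derivWithin γ (Icc a b) s - derivWithin γ (Icc a b) u‖ ≤ M * |s - u|)
    {s u : ℝ} (hs : s ∈ Icc a b) (hu : u ∈ Icc a b) :
    ‖γ s - γ u - (s - u) • derivWithin γ (Icc a b) u‖ ≤ M * |s - u| ^ 2 := by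
  set g := derivWithin γ (Icc a b)
  have hJ : uIcc u s ⊆ Icc a b := ordConnected_Icc.uIcc_subset hu hs
  have hderiv : ∀ w ∈ uIcc u s,
      HasDerivWithinAt (fun w => γ w - γ u - (w - u) • g u) (g w - g u) (uIcc u s) w := by
    intro w hw
    have hlin : HasDerivAt (fun w => (w - u) • g u) (g u) w := by
      simpa using ((hasDerivAt_id w).sub_const u).smul_const (g u)
    exact ((((hγ w (hJ hw)).hasDerivWithinAt).mono hJ).sub_const (γ u)).sub hlin.hasDerivWithinAt
  have hbound : ∀ w ∈ uIcc u s, ‖g w - g u‖ ≤ M * |s - u| := fun w hw =>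
    (hM w (hJ hw) u hu).trans (mul_le_mul_of_nonneg_left (abs_sub_left_of_mem_uIcc hw) hM0)
  have := (convex_uIcc u s).norm_image_sub_le_of_norm_hasDerivWithin_le hderiv hbound
    left_mem_uIcc right_mem_uIcc
  simp only [sub_self, zero_smul, sub_zero, Real.norm_eq_abs] at this
  calc _ ≤ M * |s - u| * |s - u| := this
    _ = M * |s - u| ^ 2 := by ring

theorem derivWithin_Icc_eq_of_apply_eq (hab : a < b) (hinj : InjOn γ (Ico a b))
    (hclose : γ a = γ b)
    (hclose' : derivWithin γ (Icc a b) a = derivWithin γ (Icc a b) b)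
    {s t : ℝ} (hs : s ∈ Icc a b) (ht : t ∈ Icc a b) (h : γ s = γ t) :
    derivWithin γ (Icc a b) s = derivWithin γ (Icc a b) t := by
  have hIco : ∀ u ∈ Icc a b, ∃ u' ∈ Ico a b,
      γ u' = γ u ∧ derivWithin γ (Icc a b) u' = derivWithin γ (Icc a b) u := by
    intro u hu
    rcases hu.2.lt_or_eq with hub | rfl
    · exact ⟨u, ⟨hu.1, hub⟩, rfl, rfl⟩
    · exact ⟨a, ⟨le_rfl, hab⟩, hclose, hclose'⟩
  obtain ⟨s', hs', hγs, hgs⟩ := hIco s hs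
  obtain ⟨t', ht', hγt, hgt⟩ := hIco t ht
  rw [← hgs, ← hgt, hinj hs' ht' (by rw [hγs, hγt, h])]

theorem exists_fiber_param_abs_sub_le_of_norm_sub_lt (hab : a < b) (hγ : ContinuousOn γ (Icc a b))
    (hinj : InjOn γ (Ico a b)) (hclose : γ a = γ b)
    (hclose' : derivWithin γ (Icc a b) a = derivWithin γ (Icc a b) b) {M : ℝ} (hM : 0 < M)
    (hTaylor : ∀ s ∈ Icc a b, ∀ u ∈ Icc a b,
      ‖γ s - γ u - (s - u) • derivWithin γ (Icc a b) u‖ ≤ M * |s - u| ^ 2)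
    {t : ℝ} (ht : t ∈ Icc a b) (hg : derivWithin γ (Icc a b) t ≠ 0) :
    ∃ ρ > 0, ∀ s ∈ Icc a b, ‖γ s - γ t‖ < ρ → ∃ t' ∈ Icc a b, γ t' = γ t ∧
      derivWithin γ (Icc a b) t' = derivWithin γ (Icc a b) t ∧
      ‖derivWithin γ (Icc a b) t‖ / 2 * |s - t'| ≤ ‖γ s - γ t‖ := by
  set G := derivWithin γ (Icc a b) t
  obtain ⟨ρ, hρ, hfiber⟩ := isCompact_Icc.exists_pos_near_fiber hγ (γ t)
    (η := ‖G‖ / (2 * M)) (by positivity)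
  refine ⟨ρ, hρ, fun s hs hst => ?_⟩
  obtain ⟨t', ht', hγt', hst'⟩ := hfiber s hs (by rwa [dist_eq_norm])
  have hgt' := derivWithin_Icc_eq_of_apply_eq hab hinj hclose hclose' ht' ht hγt'
  refine ⟨t', ht', hγt', hgt', ?_⟩
  have hfirst : |s - t'| * ‖G‖ - ‖γ s - γ t'‖ ≤ M * |s - t'| ^ 2 := by
    have hT := hTaylor s hs t' ht'
    rw [hgt', norm_sub_rev] at hT
    have := norm_sub_norm_le ((s - t') • G) (γ s - γ t')
    rw [norm_smul, Real.norm_eq_abs] at this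
    exact this.trans hT
  have hsmall : M * |s - t'| ≤ ‖G‖ / 2 := by
    rw [Real.dist_eq, lt_div_iff₀ (by positivity)] at hst'
    linarith
  rw [← hγt']
  nlinarith [abs_nonneg (s - t')]

end Curve

section CurveInner

variable {E : Type*} [NormedAddCommGroup E] [InnerProductSpace ℝ E] {γ : ℝ → E} {a b : ℝ}

theorem inner_sub_derivWithin_Icc_eq_zero_of_isMinOn (hab : a < b)
    (hγ : DifferentiableOn ℝ γ (Icc a b)) (hclose : γ a = γ b)
    (hclose' : derivWithin γ (Icc a b) a = derivWithin γ (Icc a b) b) {x : E} {s : ℝ}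
    (hs : s ∈ Icc a b) (hmin : IsMinOn (fun u => ‖x - γ u‖) (Icc a b) s) :
    ⟪x - γ s, derivWithin γ (Icc a b) s⟫ = 0 := by
  set g := derivWithin γ (Icc a b)
  have hmove : ∀ u ∈ Icc a b, IsMinOn (fun u => ‖x - γ u‖) (Icc a b) u →
      ∀ v ∈ Icc a b, (v - u) * ⟪x - γ u, g u⟫ ≤ 0 := by
    intro u hu humin v hv
    have hF : HasDerivWithinAt (fun w => ‖x - γ w‖ ^ 2) (2 * ⟪x - γ u, -g u⟫) (Icc a b) u :=
      (((hγ u hu).hasDerivWithinAt).const_sub x).norm_sq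
    have hFmin : IsMinOn (fun w => ‖x - γ w‖ ^ 2) (Icc a b) u :=
      isMinOn_iff.2 fun w hw => pow_le_pow_left₀ (norm_nonneg _) (isMinOn_iff.1 humin w hw) 2
    have := hFmin.mul_sub_nonneg_of_hasDerivWithinAt (convex_Icc a b) hF hu hv
    rw [inner_neg_right] at this
    linarith
  have ha : a ∈ Icc a b := left_mem_Icc.2 hab.le
  have hb : b ∈ Icc a b := right_mem_Icc.2 hab.le
  have hends : IsMinOn (fun u => ‖x - γ u‖) (Icc a b) a ↔
      IsMinOn (fun u => ‖x - γ u‖) (Icc a b) b := by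
    simp only [isMinOn_iff, hclose]
  have hval : ⟪x - γ a, g a⟫ = ⟪x - γ b, g b⟫ := by rw [hclose, hclose']
  rcases hs.1.eq_or_lt with has | has
  · rw [← has] at hmin ⊢
    have h₁ := hmove a ha hmin b hb
    have h₂ := hmove b hb (hends.1 hmin) a ha
    rw [← hval] at h₂
    nlinarith
  rcases hs.2.eq_or_lt with hsb | hsb
  · rw [hsb] at hmin ⊢
    have h₁ := hmove b hb hmin a ha
    have h₂ := hmove a ha (hends.2 hmin) b hb
    rw [hval] at h₂
    nlinarith
  have h₁ := hmove s hs hmin a ha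
  have h₂ := hmove s hs hmin b hb
  nlinarith

theorem isBigO_nearest_point_field_sub_starProjection (hab : a < b)
    (hγ : ContDiffOn ℝ 2 γ (Icc a b)) (hinj : InjOn γ (Ico a b)) (hclose : γ a = γ b)
    (hclose' : derivWithin γ (Icc a b) a = derivWithin γ (Icc a b) b) {t : ℝ}
    (ht : t ∈ Icc a b) (hg : derivWithin γ (Icc a b) t ≠ 0) {p : E → E}
    (hp : ∀ᶠ x in 𝓝 (γ t),
      p x ∈ γ '' Icc a b ∧ dist x (p x) = infDist x (γ '' Icc a b)) :
    (fun x => x - p x - (ℝ ∙ derivWithin γ (Icc a b) t)ᗮ.starProjection (x - γ t))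
      =O[𝓝 (γ t)] fun x => ‖x - γ t‖ ^ 2 := by
  obtain ⟨M, hM, hMg⟩ := exists_norm_derivWithin_Icc_sub_le hab hγ
  have hTaylor : ∀ s ∈ Icc a b, ∀ u ∈ Icc a b,
      ‖γ s - γ u - (s - u) • derivWithin γ (Icc a b) u‖ ≤ M * |s - u| ^ 2 := fun _ hs _ hu =>
    norm_sub_sub_smul_derivWithin_Icc_le (hγ.differentiableOn two_ne_zero) hM.le hMg hs hu
  obtain ⟨ρ, hρ, hparam⟩ := exists_fiber_param_abs_sub_le_of_norm_sub_lt hab hγ.continuousOn hinj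
    hclose hclose' hM hTaylor ht hg
  refine IsBigO.of_bound (20 * M / ‖derivWithin γ (Icc a b) t‖ ^ 2) ?_
  filter_upwards [hp, ball_mem_nhds (γ t) (half_pos hρ)] with x ⟨⟨s, hs, hps⟩, hpd⟩ hx
  rw [← hps] at hpd ⊢
  rw [mem_ball, dist_eq_norm] at hx
  set r := ‖x - γ t‖
  have hmin := isMinOn_norm_sub_of_dist_eq_infDist hpd
  have hxs : ‖x - γ s‖ ≤ r := isMinOn_iff.1 hmin t ht
  have hst : ‖γ s - γ t‖ ≤ 2 * r := by
    linarith [norm_sub_le_norm_sub_add_norm_sub (γ s) x (γ t), norm_sub_rev (γ s) x]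
  obtain ⟨t', ht', hγt', hgt', hlow⟩ := hparam s hs (by linarith)
  set g := derivWithin γ (Icc a b)
  have hG : 0 < ‖g t‖ := norm_pos_iff.2 hg
  have hc : |s - t'| ≤ 4 * r / ‖g t‖ := by
    rw [le_div_iff₀ hG]
    nlinarith
  have hsplit : x - γ t = (x - γ s) + (s - t') • g t + (γ s - γ t' - (s - t') • g t) := by
    rw [hγt']
    abel
  have hperp := inner_sub_derivWithin_Icc_eq_zero_of_isMinOn hab (hγ.differentiableOn two_ne_zero)
    hclose hclose' hs hmin
  rw [hsplit, Real.norm_eq_abs, abs_of_nonneg (by positivity)]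
  calc _ ≤ ‖g t - g s‖ * ‖x - γ s‖ / ‖g t‖ + ‖γ s - γ t' - (s - t') • g t‖ :=
        Submodule.norm_sub_starProjection_orthogonal_singleton_le _ hperp
    _ ≤ M * |s - t'| * r / ‖g t‖ + M * |s - t'| ^ 2 := by
        rw [← hgt']
        gcongr
        · exact (hMg t' ht' s hs).trans_eq (by rw [abs_sub_comm])
        · exact hTaylor s hs t' ht'
    _ ≤ M * (4 * r / ‖g t‖) * r / ‖g t‖ + M * (4 * r / ‖g t‖) ^ 2 := by gcongr
    _ = 20 * M / ‖g t‖ ^ 2 * r ^ 2 := by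
        field_simp
        ring

end CurveInner

theorem derivative_of_nearest_point_field_on_circuit_general (n : ℕ)
    (a b : ℝ) (hab : a < b)
    (γ : ℝ → Euc n) (hγ : ContDiffOn ℝ 3 γ (Set.Icc a b))
    (hγ' : ∀ t ∈ Set.Icc a b, curveDeriv γ a b t ≠ 0)
    (hclose : γ a = γ b) (hclose' : curveDeriv γ a b a = curveDeriv γ a b b)
    (hγinj : Set.InjOn γ (Set.Ico a b))
    (ε : ℝ) (hε : 0 < ε) (pnear : Euc n → Euc n)
    (hpΓ : ∀ x ∈ distTube (γ '' Set.Icc a b) ε, pnear x ∈ γ '' Set.Icc a b)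
    (hpdist : ∀ x ∈ distTube (γ '' Set.Icc a b) ε,
      dist x (pnear x) = infDist x (γ '' Set.Icc a b)) :
    ∀ t ∈ Set.Icc a b, ∃ L : Euc n →L[ℝ] Euc n,
      HasFDerivAt (fun x => x - pnear x) L (γ t) ∧
      L (curveDeriv γ a b t) = 0 ∧
      (∀ ψ : Euc n, (inner ℝ ψ (curveDeriv γ a b t) : ℝ) = 0 → L ψ = ψ) ∧
      LinearMap.trace ℝ (Euc n) (L : Euc n →ₗ[ℝ] Euc n) = (n : ℝ) - 1 ∧
      (∀ η : Euc n, (inner ℝ (L η) η : ℝ) =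
        ‖η‖ ^ 2 - (inner ℝ η (curveDeriv γ a b t) : ℝ) ^ 2 / ‖curveDeriv γ a b t‖ ^ 2) := by
  intro t ht
  have hp : ∀ᶠ x in 𝓝 (γ t),
      pnear x ∈ γ '' Icc a b ∧ dist x (pnear x) = infDist x (γ '' Icc a b) := by
    filter_upwards [ball_mem_nhds (γ t) hε] with x hx
    have hx' : x ∈ distTube (γ '' Icc a b) ε :=
      (infDist_le_dist_of_mem (mem_image_of_mem γ ht)).trans_lt hx
    exact ⟨hpΓ x hx', hpdist x hx'⟩
  refine ⟨(ℝ ∙ curveDeriv γ a b t)ᗮ.starProjection, hasFDerivAt_of_isBigO_sub_sq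
      (isBigO_nearest_point_field_sub_starProjection hab (hγ.of_le (by norm_num)) hγinj hclose
        hclose' ht (hγ' t ht) hp),
    Submodule.starProjection_orthogonalComplement_singleton_eq_zero _,
    fun ψ hψ => Submodule.starProjection_eq_self_iff.2
      (Submodule.mem_orthogonal_singleton_iff_inner_left.2 hψ), ?_,
    Submodule.inner_starProjection_orthogonal_singleton_self _⟩
  rw [Submodule.trace_starProjection_orthogonal_singleton (hγ' t ht), finrank_euclideanSpace_fin]

/-- Identities (2.28)–(2.30): the field `ṽ(x) = x − p(x)` (with `p` the nearest-point
projection onto the circuit) is differentiable at points of the circuit, its derivative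
kills the tangent direction and is the identity on the normal directions; hence its
divergence there is `n − 1` and its quadratic form is
`|η|² − (η·γ'(t))²/|γ'(t)|²`. -/
theorem derivative_of_nearest_point_field_on_circuit (n : ℕ) (hn : 3 ≤ n)
    (a b : ℝ) (hab : a < b)
    (γ : ℝ → Euc n) (hγ : ContDiffOn ℝ 3 γ (Set.Icc a b))
    (hγ' : ∀ t ∈ Set.Icc a b, curveDeriv γ a b t ≠ 0)
    (hclose : γ a = γ b) (hclose' : curveDeriv γ a b a = curveDeriv γ a b b)
    (hγinj : Set.InjOn γ (Set.Ico a b))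
    (ε : ℝ) (hε : 0 < ε) (pnear : Euc n → Euc n)
    (hpΓ : ∀ x ∈ distTube (γ '' Set.Icc a b) ε, pnear x ∈ γ '' Set.Icc a b)
    (hpdist : ∀ x ∈ distTube (γ '' Set.Icc a b) ε,
      dist x (pnear x) = infDist x (γ '' Set.Icc a b))
    (hpuniq : ∀ x ∈ distTube (γ '' Set.Icc a b) ε, ∀ y ∈ γ '' Set.Icc a b,
      dist x y = infDist x (γ '' Set.Icc a b) → y = pnear x) :
    ∀ t ∈ Set.Icc a b, ∃ L : Euc n →L[ℝ] Euc n,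
      HasFDerivAt (fun x => x - pnear x) L (γ t) ∧
      L (curveDeriv γ a b t) = 0 ∧
      (∀ ψ : Euc n, (inner ℝ ψ (curveDeriv γ a b t) : ℝ) = 0 → L ψ = ψ) ∧
      LinearMap.trace ℝ (Euc n) (L : Euc n →ₗ[ℝ] Euc n) = (n : ℝ) - 1 ∧
      (∀ η : Euc n, (inner ℝ (L η) η : ℝ) =
        ‖η‖ ^ 2 - (inner ℝ η (curveDeriv γ a b t) : ℝ) ^ 2 / ‖curveDeriv γ a b t‖ ^ 2) :=
  derivative_of_nearest_point_field_on_circuit_general n a b hab γ hγ hγ' hclose hclose' hγinj ε hε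
    pnear hpΓ hpdist
end
end

section
/- Let 1 ≤ k < n, let M be a compact smooth k-dimensional manifold without boundary and φ : M → ℝⁿ a smooth topological embedding whose differential is injective at every point, and set Γ_k = φ(M). Let ε̄₁ > 0 be such that the normal disks x + N_{ε̄₁}(x), x ∈ Γ_k, are pairwise disjoint; for z ∈ T_{ε̄₁}(Γ_k) let p_k(z) denote the unique x ∈ Γ_k with z ∈ x + N_{ε̄₁}(x), set v_k(z) = z − p_k(z), and assume v_k is C¹ on the closure of T_{ε'}(Γ_k) for some ε' ∈ (0, ε̄₁). Then lim_{ε→0⁺} sup{|n − k − div v_k(z)| : z ∈ T_ε(Γ_k)} = 0 and lim_{ε→0⁺} sup{dv_k(z)[η]·η : z ∈ T_ε(Γ_k), η ∈ ℝⁿ, |η| = 1} = 1, where dv_k(z) denotes the (Fréchet) derivative of v_k at z and div v_k its trace. -/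
open Metric Set Manifold

noncomputable section

section ManifoldDefs

variable (k : ℕ) {n : ℕ} {M : Type*} [TopologicalSpace M]
  [ChartedSpace (EuclideanSpace ℝ (Fin k)) M]

/-- The tangent space to `Γ_k = φ(M)` at `φ y`, as a submodule of `ℝⁿ`: the range of the
differential of `φ` at `y`. -/
def tangentRange (φ : M → Euc n) (y : M) : Submodule ℝ (Euc n) :=
  LinearMap.range (mfderiv (𝓡 k) 𝓘(ℝ, Euc n) φ y).toLinearMap

/-- The tubular neighbourhood `T_ε(Γ_k) = ⋃_{x ∈ Γ_k} (x + N_ε(x))`, where `N_ε(x)` is the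
open normal `ε`-disk at `x`. -/
def tubeManifold (φ : M → Euc n) (ε : ℝ) : Set (Euc n) :=
  {z | ∃ y : M, ∃ ξ ∈ (tangentRange k φ y)ᗮ, ‖ξ‖ < ε ∧ z = φ y + ξ}

end ManifoldDefs


/-!
On `Γ` the field `v = id - φ ∘ pk` vanishes, and along each normal disk it is the translation
`v (φ y + ξ) = ξ`; hence `dv (φ y)` is the orthogonal projection onto the normal space, whose trace
is `n - k` and whose quadratic form is at most `‖η‖²`, with equality for normal `η`. Since `dv` is
continuous at the points of the compact set `Γ`, it is uniformly close to these projections on thin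
tubes. The `C¹` hypothesis on the closure of `T_ε'` applies at points of `Γ` because `T_ε'` is open:
it is the `ε'`-neighbourhood of `Γ`, a nearest point of `Γ` being the foot of a normal.
-/

open scoped InnerProductSpace Topology

section LinearAlgebra

variable {E : Type*} [NormedAddCommGroup E] [InnerProductSpace ℝ E]

theorem abs_trace_le_finrank_mul_norm [FiniteDimensional ℝ E] (A : E →L[ℝ] E) :
    |LinearMap.trace ℝ E A| ≤ Module.finrank ℝ E * ‖A‖ := by
  let b := stdOrthonormalBasis ℝ E
  have hdiag (i) : |⟪b i, A (b i)⟫_ℝ| ≤ ‖A‖ :=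
    calc |⟪b i, A (b i)⟫_ℝ| ≤ ‖b i‖ * ‖A (b i)‖ := abs_real_inner_le_norm _ _
      _ ≤ ‖b i‖ * (‖A‖ * ‖b i‖) := by gcongr; exact A.le_opNorm _
      _ = ‖A‖ := by simp [b.orthonormal.1 i]
  rw [LinearMap.trace_eq_sum_inner _ b]
  calc |∑ i, ⟪b i, A (b i)⟫_ℝ| ≤ ∑ i, |⟪b i, A (b i)⟫_ℝ| := Finset.abs_sum_le_sum_abs _ _
    _ ≤ ∑ _i, ‖A‖ := Finset.sum_le_sum fun i _ => hdiag i
    _ = Module.finrank ℝ E * ‖A‖ := by simp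

theorem abs_trace_sub_trace_le [FiniteDimensional ℝ E] (A B : E →L[ℝ] E) :
    |LinearMap.trace ℝ E A - LinearMap.trace ℝ E B| ≤ Module.finrank ℝ E * ‖A - B‖ := by
  simpa only [ContinuousLinearMap.toLinearMap_sub, map_sub] using
    abs_trace_le_finrank_mul_norm (A - B)

theorem Submodule.trace_starProjection [FiniteDimensional ℝ E] (K : Submodule ℝ E) :
    LinearMap.trace ℝ E K.starProjection = Module.finrank ℝ K :=
  LinearMap.IsProj.trace
    ⟨K.starProjection_apply_mem, fun _ hx => K.starProjection_eq_self_iff.mpr hx⟩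

theorem Submodule.inner_starProjection_self_le (K : Submodule ℝ E) [K.HasOrthogonalProjection]
    (η : E) : ⟪K.starProjection η, η⟫_ℝ ≤ ‖η‖ ^ 2 := by
  have h := K.re_inner_starProjection_eq_normSq η
  simp only [RCLike.re_to_real] at h
  rw [h]
  gcongr
  exact K.norm_orthogonalProjectionOnto_apply_le η

theorem inner_apply_self_le_one_add_norm_sub_starProjection (K : Submodule ℝ E)
    [K.HasOrthogonalProjection] (A : E →L[ℝ] E) {η : E} (hη : ‖η‖ = 1) :
    ⟪A η, η⟫_ℝ ≤ 1 + ‖A - K.starProjection‖ := by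
  have hdiff : ⟪(A - K.starProjection) η, η⟫_ℝ ≤ ‖A - K.starProjection‖ :=
    calc ⟪(A - K.starProjection) η, η⟫_ℝ ≤ ‖(A - K.starProjection) η‖ * ‖η‖ :=
          real_inner_le_norm _ _
      _ ≤ ‖A - K.starProjection‖ * ‖η‖ * ‖η‖ := by gcongr; exact (A - K.starProjection).le_opNorm η
      _ = ‖A - K.starProjection‖ := by simp [hη]
  have hproj := K.inner_starProjection_self_le η
  rw [hη, one_pow] at hproj
  rw [sub_apply, inner_sub_left] at hdiff
  linarith

theorem abs_finrank_sub_trace_lt [FiniteDimensional ℝ E] (K : Submodule ℝ E) (A : E →L[ℝ] E)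
    {δ : ℝ} (hA : ‖A - K.starProjection‖ < δ / (Module.finrank ℝ E + 1)) :
    |Module.finrank ℝ K - LinearMap.trace ℝ E A| < δ := by
  rw [← K.trace_starProjection, abs_sub_comm]
  calc |LinearMap.trace ℝ E A - LinearMap.trace ℝ E K.starProjection|
      ≤ Module.finrank ℝ E * ‖A - K.starProjection‖ := abs_trace_sub_trace_le _ _
    _ ≤ (Module.finrank ℝ E + 1) * ‖A - K.starProjection‖ := by gcongr; linarith
    _ < δ := by rwa [lt_div_iff₀' (by positivity)] at hA

theorem Submodule.exists_norm_eq_one_inner_starProjection_eq_one (K : Submodule ℝ E)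
    [K.HasOrthogonalProjection] (hK : 0 < Module.finrank ℝ K) :
    ∃ η : E, ‖η‖ = 1 ∧ ⟪K.starProjection η, η⟫_ℝ = 1 := by
  have : Nontrivial K := Module.nontrivial_of_finrank_pos hK
  obtain ⟨η, hη⟩ := exists_norm_eq K zero_le_one
  replace hη : ‖(η : E)‖ = 1 := hη
  refine ⟨η, hη, ?_⟩
  rw [K.starProjection_eq_self_iff.mpr η.2, real_inner_self_eq_norm_sq, hη, one_pow]

theorem ContinuousLinearMap.eq_starProjection {K : Submodule ℝ E} [K.HasOrthogonalProjection]
    {D : E →L[ℝ] E} (hK : ∀ x ∈ K, D x = x) (hKperp : ∀ x ∈ Kᗮ, D x = 0) :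
    D = K.starProjection := by
  ext x
  have h := hKperp _ (K.sub_starProjection_mem_orthogonal x)
  rwa [map_sub, hK _ (K.starProjection_apply_mem x), sub_eq_zero] at h

end LinearAlgebra

theorem HasFDerivAt.apply_eq_of_eventually_eq_smul {E F : Type*} [NormedAddCommGroup E]
    [NormedSpace ℝ E] [NormedAddCommGroup F] [NormedSpace ℝ F] {v : E → F} {D : E →L[ℝ] F}
    {x ξ : E} {w : F} (hv : HasFDerivAt v D x) (h : ∀ᶠ t in 𝓝 (0 : ℝ), v (x + t • ξ) = t • w) :
    D ξ = w := by
  have hline : HasDerivAt (fun t : ℝ => x + t • ξ) ξ 0 := by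
    simpa using ((hasDerivAt_id (0 : ℝ)).smul_const ξ).const_add x
  have hcomp : HasDerivAt (fun t : ℝ => v (x + t • ξ)) (D ξ) 0 :=
    (by simpa using hv : HasFDerivAt v D (x + (0 : ℝ) • ξ)).comp_hasDerivAt 0 hline
  exact hcomp.unique ((by simpa using (hasDerivAt_id (0 : ℝ)).smul_const w :
    HasDerivAt (fun t : ℝ => t • w) w 0).congr_of_eventuallyEq h)

theorem IsCompact.exists_forall_dist_lt_of_continuousAt {α β : Type*} [PseudoMetricSpace α]
    [PseudoMetricSpace β] {s : Set α} (hs : IsCompact s) {f : α → β}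
    (hf : ∀ x ∈ s, ContinuousAt f x) {δ : ℝ} (hδ : 0 < δ) :
    ∃ r > 0, ∀ x ∈ s, ∀ z, dist x z < r → dist (f x) (f z) < δ := by
  obtain ⟨r, hr, h⟩ := Metric.mem_uniformity_dist.mp
    (hs.uniformContinuousAt_of_continuousAt f hf (Metric.dist_mem_uniformity hδ))
  exact ⟨r, hr, fun x hx z hxz => h hxz hx⟩

section Tube

variable {k n : ℕ} {M : Type*} [TopologicalSpace M] [ChartedSpace (EuclideanSpace ℝ (Fin k)) M]
  {φ : M → Euc n}

theorem mem_tubeManifold_self {ε : ℝ} (hε : 0 < ε) (y : M) : φ y ∈ tubeManifold k φ ε :=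
  ⟨y, 0, Submodule.zero_mem _, by simpa using hε, by simp⟩

theorem MDifferentiableAt.hasFDerivAt_comp_extChartAt_symm {y : M}
    (hφ : MDifferentiableAt (𝓡 k) 𝓘(ℝ, Euc n) φ y) :
    HasFDerivAt (φ ∘ (extChartAt (𝓡 k) y).symm) (mfderiv (𝓡 k) 𝓘(ℝ, Euc n) φ y)
      (extChartAt (𝓡 k) y y) := by
  have h := hφ.hasMFDerivAt.2
  simp only [writtenInExtChartAt, extChartAt_model_space_eq_id, PartialEquiv.refl_coe,
    ModelWithCorners.range_eq_univ, Function.id_comp] at h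
  exact hasFDerivWithinAt_univ.mp h

theorem sub_mem_orthogonal_tangentRange_of_forall_dist_le {z : Euc n} {y₀ : M}
    (hφ : MDifferentiableAt (𝓡 k) 𝓘(ℝ, Euc n) φ y₀) (hmin : ∀ y, dist z (φ y₀) ≤ dist z (φ y)) :
    z - φ y₀ ∈ (tangentRange k φ y₀)ᗮ := by
  set c := extChartAt (𝓡 k) y₀
  set L := mfderiv (𝓡 k) 𝓘(ℝ, Euc n) φ y₀
  have hd := (hφ.hasFDerivAt_comp_extChartAt_symm.const_sub z).norm_sq
  have hloc : IsLocalMin (fun u => ‖z - (φ ∘ c.symm) u‖ ^ 2) (c y₀) :=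
    Filter.Eventually.of_forall fun u => by
      have := hmin (c.symm u)
      rw [dist_eq_norm, dist_eq_norm] at this
      simp only [Function.comp_apply, c, extChartAt_to_inv]
      gcongr
  have h0 := hloc.hasFDerivAt_eq_zero hd
  rw [Submodule.mem_orthogonal']
  rintro _ ⟨u, rfl⟩
  rw [Function.comp_apply, extChartAt_to_inv] at h0
  -- `L u` lives in a tangent space; viewing it in `Euc n` lets the `inner` lemmas apply.
  have h : (2 : ℕ) • ⟪z - φ y₀, -(show Euc n from L u)⟫_ℝ = 0 := DFunLike.congr_fun h0 u
  rw [inner_neg_right, smul_neg, neg_eq_zero, smul_eq_zero] at h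
  exact h.resolve_left two_ne_zero

theorem tubeManifold_eq_setOf_infDist_lt [CompactSpace M] [Nonempty M]
    (hφ : MDifferentiable (𝓡 k) 𝓘(ℝ, Euc n) φ) (ε : ℝ) :
    tubeManifold k φ ε = {z | infDist z (range φ) < ε} := by
  ext z
  constructor
  · rintro ⟨y, ξ, -, hξ, rfl⟩
    calc infDist (φ y + ξ) (range φ) ≤ dist (φ y + ξ) (φ y) :=
          infDist_le_dist_of_mem (mem_range_self y)
      _ < ε := by simpa using hξ
  · intro hz
    obtain ⟨_, ⟨y₀, rfl⟩, hy₀⟩ :=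
      (isCompact_range hφ.continuous).exists_infDist_eq_dist (range_nonempty φ) z
    refine ⟨y₀, z - φ y₀, sub_mem_orthogonal_tangentRange_of_forall_dist_le (hφ y₀) fun y => ?_,
      ?_, by abel⟩
    · rw [← hy₀]
      exact infDist_le_dist_of_mem (mem_range_self y)
    · rwa [← dist_eq_norm, ← hy₀]

theorem isOpen_tubeManifold [CompactSpace M] [Nonempty M]
    (hφ : MDifferentiable (𝓡 k) 𝓘(ℝ, Euc n) φ) (ε : ℝ) : IsOpen (tubeManifold k φ ε) := by
  rw [tubeManifold_eq_setOf_infDist_lt hφ]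
  exact isOpen_lt (continuous_infDist_pt _) continuous_const

theorem eq_of_normal_disks_disjoint {r : ℝ}
    (hdisj : ∀ y₁ y₂ : M, y₁ ≠ y₂ →
      Disjoint
        ((fun ξ => φ y₁ + ξ) '' {ξ ∈ (tangentRange k φ y₁)ᗮ | ‖ξ‖ < r})
        ((fun ξ => φ y₂ + ξ) '' {ξ ∈ (tangentRange k φ y₂)ᗮ | ‖ξ‖ < r}))
    {pk : Euc n → M}
    (hpk : ∀ z ∈ tubeManifold k φ r,
      (z - φ (pk z)) ∈ (tangentRange k φ (pk z))ᗮ ∧ ‖z - φ (pk z)‖ < r)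
    {y : M} {ξ : Euc n} (hξ : ξ ∈ (tangentRange k φ y)ᗮ) (hξr : ‖ξ‖ < r) :
    pk (φ y + ξ) = y := by
  by_contra hne
  obtain ⟨hN, hr⟩ := hpk _ ⟨y, ξ, hξ, hξr, rfl⟩
  exact disjoint_left.mp (hdisj _ y hne) ⟨_, ⟨hN, hr⟩, add_sub_cancel _ _⟩ ⟨ξ, ⟨hξ, hξr⟩, rfl⟩

theorem fderiv_eq_starProjection_of_apply_add_normal {v : Euc n → Euc n} {r : ℝ} (hr : 0 < r)
    (hv : ∀ y, ∀ ξ ∈ (tangentRange k φ y)ᗮ, ‖ξ‖ < r → v (φ y + ξ) = ξ) {y₀ : M}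
    (hφ : MDifferentiableAt (𝓡 k) 𝓘(ℝ, Euc n) φ y₀) (hdiff : DifferentiableAt ℝ v (φ y₀)) :
    fderiv ℝ v (φ y₀) = (tangentRange k φ y₀)ᗮ.starProjection := by
  set c := extChartAt (𝓡 k) y₀
  apply ContinuousLinearMap.eq_starProjection
  · intro ξ hξ
    refine hdiff.hasFDerivAt.apply_eq_of_eventually_eq_smul ?_
    have hsmall : ∀ᶠ t in 𝓝 (0 : ℝ), ‖t • ξ‖ < r :=
      (by fun_prop : Continuous fun t : ℝ => ‖t • ξ‖).continuousAt.eventually_lt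
        continuousAt_const (by simpa using hr)
    filter_upwards [hsmall] with t ht
    exact hv y₀ _ (Submodule.smul_mem _ t hξ) ht
  · rw [Submodule.orthogonal_orthogonal]
    rintro _ ⟨u, rfl⟩
    have hvφ : v ∘ φ ∘ c.symm = fun _ => 0 := funext fun u => by
      simpa using hv (c.symm u) 0 (Submodule.zero_mem _) (by simpa using hr)
    have hcomp := (by simpa [c, extChartAt_to_inv] using hdiff.hasFDerivAt :
      HasFDerivAt v (fderiv ℝ v (φ y₀)) (φ (c.symm (c y₀)))).comp (c y₀)
      hφ.hasFDerivAt_comp_extChartAt_symm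
    rw [hvφ] at hcomp
    exact (DFunLike.congr_fun ((hasFDerivAt_const 0 (c y₀)).unique hcomp) u).symm

theorem exists_forall_mem_tubeManifold_dist_lt [CompactSpace M] {β : Type*} [PseudoMetricSpace β]
    (hφ : Continuous φ) {F : Euc n → β} (hF : ∀ y, ContinuousAt F (φ y)) {δ : ℝ} (hδ : 0 < δ) :
    ∃ r > 0, ∀ ε < r, ∀ z ∈ tubeManifold k φ ε, ∃ y, dist (F z) (F (φ y)) < δ := by
  obtain ⟨r, hr, hclose⟩ := (isCompact_range hφ).exists_forall_dist_lt_of_continuousAt (f := F)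
    (by rintro _ ⟨y, rfl⟩; exact hF y) hδ
  refine ⟨r, hr, fun ε hεr => ?_⟩
  rintro _ ⟨y, ξ, -, hξ, rfl⟩
  refine ⟨y, dist_comm (F (φ y)) _ ▸ hclose _ ⟨y, rfl⟩ _ ?_⟩
  simpa [dist_eq_norm] using hξ.trans hεr

theorem finrank_orthogonal_tangentRange {y : M}
    (himm : Function.Injective (mfderiv (𝓡 k) 𝓘(ℝ, Euc n) φ y)) :
    Module.finrank ℝ (tangentRange k φ y)ᗮ = n - k := by
  have hT : Module.finrank ℝ (tangentRange k φ y) = k :=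
    (LinearMap.finrank_range_of_inj himm).trans finrank_euclideanSpace_fin
  have h := (tangentRange k φ y).finrank_add_finrank_orthogonal
  rw [hT, finrank_euclideanSpace_fin] at h
  omega

end Tube

theorem limits_of_divergence_and_quadratic_form_submanifold_general (k n : ℕ)
    (hkn : k < n)
    (M : Type*) [TopologicalSpace M] [ChartedSpace (EuclideanSpace ℝ (Fin k)) M]
    [CompactSpace M]
    (φ : M → Euc n) (hφ : ContMDiff (𝓡 k) 𝓘(ℝ, Euc n) (⊤ : ℕ∞) φ)
    (himm : ∀ y : M, Function.Injective (mfderiv (𝓡 k) 𝓘(ℝ, Euc n) φ y))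
    (εbar₁ : ℝ) (hεbar₁ : 0 < εbar₁)
    (hdisj : ∀ y₁ y₂ : M, y₁ ≠ y₂ →
      Disjoint
        ((fun ξ => φ y₁ + ξ) '' {ξ ∈ (tangentRange k φ y₁)ᗮ | ‖ξ‖ < εbar₁})
        ((fun ξ => φ y₂ + ξ) '' {ξ ∈ (tangentRange k φ y₂)ᗮ | ‖ξ‖ < εbar₁}))
    (pk : Euc n → M)
    (hpk : ∀ z ∈ tubeManifold k φ εbar₁,
      (z - φ (pk z)) ∈ (tangentRange k φ (pk z))ᗮ ∧ ‖z - φ (pk z)‖ < εbar₁)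
    (ε' : ℝ) (hε' : ε' ∈ Set.Ioo 0 εbar₁)
    (hC1 : ContDiffOn ℝ 1 (fun z => z - φ (pk z)) (closure (tubeManifold k φ ε'))) :
    ∀ δ > 0, ∃ ε₀ > 0, ∀ ε : ℝ, 0 < ε → ε < ε₀ →
      (∀ z ∈ tubeManifold k φ ε,
        |(n : ℝ) - k - LinearMap.trace ℝ (Euc n)
          (fderiv ℝ (fun y => y - φ (pk y)) z : Euc n →ₗ[ℝ] Euc n)| < δ) ∧
      (∀ z ∈ tubeManifold k φ ε, ∀ η : Euc n, ‖η‖ = 1 →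
        (inner ℝ (fderiv ℝ (fun y => y - φ (pk y)) z η) η : ℝ) < 1 + δ) ∧
      (∃ z ∈ tubeManifold k φ ε, ∃ η : Euc n, ‖η‖ = 1 ∧
        1 - δ < (inner ℝ (fderiv ℝ (fun y => y - φ (pk y)) z η) η : ℝ)) := by
  intro δ hδ
  have : Nonempty M := ⟨pk 0⟩
  have hφ' : MDifferentiable (𝓡 k) 𝓘(ℝ, Euc n) φ := hφ.mdifferentiable (by simp)
  set v : Euc n → Euc n := fun z => z - φ (pk z)
  set P : M → Euc n →L[ℝ] Euc n := fun y => (tangentRange k φ y)ᗮ.starProjection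
  have hv (y : M) (ξ) (hξ : ξ ∈ (tangentRange k φ y)ᗮ) (hξr : ‖ξ‖ < εbar₁) : v (φ y + ξ) = ξ := by
    simp [v, eq_of_normal_disks_disjoint hdisj hpk hξ hξr]
  have hC1Γ (y : M) : ContDiffAt ℝ 1 v (φ y) :=
    hC1.contDiffAt (Filter.mem_of_superset ((isOpen_tubeManifold hφ' ε').mem_nhds
      (mem_tubeManifold_self hε'.1 y)) subset_closure)
  have hP (y : M) : fderiv ℝ v (φ y) = P y :=
    fderiv_eq_starProjection_of_apply_add_normal hεbar₁ hv (hφ' y)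
      ((hC1Γ y).differentiableAt one_ne_zero)
  obtain ⟨r, hr, hnear⟩ := exists_forall_mem_tubeManifold_dist_lt (k := k) hφ'.continuous
    (fun y => (hC1Γ y).continuousAt_fderiv one_ne_zero) (by positivity : 0 < δ / (n + 1))
  refine ⟨r, hr, fun ε hε hεr => ⟨fun z hz => ?_, fun z hz η hη => ?_, ?_⟩⟩
  · obtain ⟨y, hy⟩ := hnear ε hεr z hz
    rw [hP, dist_eq_norm] at hy
    have h := abs_finrank_sub_trace_lt _ _ (by rwa [finrank_euclideanSpace_fin])
    rwa [finrank_orthogonal_tangentRange (himm y), Nat.cast_sub hkn.le] at h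
  · obtain ⟨y, hy⟩ := hnear ε hεr z hz
    rw [hP, dist_eq_norm] at hy
    calc ⟪fderiv ℝ v z η, η⟫_ℝ ≤ 1 + ‖fderiv ℝ v z - P y‖ :=
          inner_apply_self_le_one_add_norm_sub_starProjection _ _ hη
      _ < 1 + δ := by linarith [div_le_self hδ.le (by linarith : (1 : ℝ) ≤ n + 1)]
  · obtain ⟨y⟩ := ‹Nonempty M›
    obtain ⟨η, hη, hPη⟩ := (tangentRange k φ y)ᗮ.exists_norm_eq_one_inner_starProjection_eq_one
      (by rw [finrank_orthogonal_tangentRange (himm y)]; omega)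
    exact ⟨φ y, mem_tubeManifold_self hε y, η, hη, by rw [hP]; linarith⟩

/-- Limits (3.5) and (3.6): `sup{|n−k−div v_k(z)| : z ∈ T_ε(Γ_k)} → 0` and
`sup{dv_k(z)[η]·η : z ∈ T_ε(Γ_k), |η| = 1} → 1` as `ε → 0⁺`. -/
theorem limits_of_divergence_and_quadratic_form_submanifold (k n : ℕ) (hk : 1 ≤ k)
    (hkn : k < n)
    (M : Type*) [TopologicalSpace M] [ChartedSpace (EuclideanSpace ℝ (Fin k)) M]
    [IsManifold (𝓡 k) ((⊤ : ℕ∞) : WithTop ℕ∞) M] [CompactSpace M]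
    (φ : M → Euc n) (hφ : ContMDiff (𝓡 k) 𝓘(ℝ, Euc n) (⊤ : ℕ∞) φ)
    (hemb : Topology.IsEmbedding φ)
    (himm : ∀ y : M, Function.Injective (mfderiv (𝓡 k) 𝓘(ℝ, Euc n) φ y))
    (εbar₁ : ℝ) (hεbar₁ : 0 < εbar₁)
    (hdisj : ∀ y₁ y₂ : M, y₁ ≠ y₂ →
      Disjoint
        ((fun ξ => φ y₁ + ξ) '' {ξ ∈ (tangentRange k φ y₁)ᗮ | ‖ξ‖ < εbar₁})
        ((fun ξ => φ y₂ + ξ) '' {ξ ∈ (tangentRange k φ y₂)ᗮ | ‖ξ‖ < εbar₁}))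
    (pk : Euc n → M)
    (hpk : ∀ z ∈ tubeManifold k φ εbar₁,
      (z - φ (pk z)) ∈ (tangentRange k φ (pk z))ᗮ ∧ ‖z - φ (pk z)‖ < εbar₁)
    (ε' : ℝ) (hε' : ε' ∈ Set.Ioo 0 εbar₁)
    (hC1 : ContDiffOn ℝ 1 (fun z => z - φ (pk z)) (closure (tubeManifold k φ ε'))) :
    ∀ δ > 0, ∃ ε₀ > 0, ∀ ε : ℝ, 0 < ε → ε < ε₀ →
      (∀ z ∈ tubeManifold k φ ε,
        |(n : ℝ) - k - LinearMap.trace ℝ (Euc n)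
          (fderiv ℝ (fun y => y - φ (pk y)) z : Euc n →ₗ[ℝ] Euc n)| < δ) ∧
      (∀ z ∈ tubeManifold k φ ε, ∀ η : Euc n, ‖η‖ = 1 →
        (inner ℝ (fderiv ℝ (fun y => y - φ (pk y)) z η) η : ℝ) < 1 + δ) ∧
      (∃ z ∈ tubeManifold k φ ε, ∃ η : Euc n, ‖η‖ = 1 ∧
        1 - δ < (inner ℝ (fderiv ℝ (fun y => y - φ (pk y)) z η) η : ℝ)) :=
  limits_of_divergence_and_quadratic_form_submanifold_general k n hkn M φ hφ himm εbar₁ hεbar₁ hdisj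
    pk hpk ε' hε' hC1
end
end
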